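/- Let G and H be graphs, f : G → H a graph homomorphism, v a non-isolated vertex of G, and w = f(v). Then: (a) for any ×-homotopy h : G × I_n → H from f to f, the ≃₂-class in π₁²(H,w) of the closed walk (h(v,0), h(v′,0), h(v,1), h(v′,1), …, h(v′,n−1), h(v,n)) does not depend on the choice of the neighbor v′ of v; and (b) the set Π(f,v) of realizable elements is a subgroup of π₁²(H,w) contained in the even part π₁²(H,w)_ev. -/

import Mathlib

structure RGraph where
  V : Type
  E : V → V → Prop
  symm : ∀ {x y}, E x y → E y x

def IsGraphHom (G H : RGraph) (f : G.V → H.V) : Prop :=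
  ∀ {x y}, G.E x y → H.E (f x) (f y)

structure Walk (G : RGraph) (a b : G.V) where
  len : ℕ
  toFun : ℕ → G.V
  start_eq : toFun 0 = a
  end_eq : toFun len = b
  adj : ∀ i, i < len → G.E (toFun i) (toFun (i + 1))

structure MultiHom (G H : RGraph) where
  toFun : G.V → Set H.V
  nonempty : ∀ x, (toFun x).Nonempty
  edge : ∀ {x y}, G.E x y → ∀ a ∈ toFun x, ∀ b ∈ toFun y, H.E a b

def MultiHom.le {G H : RGraph} (η η' : MultiHom G H) : Prop :=
  ∀ x, η.toFun x ⊆ η'.toFun x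

def SameComponent {G H : RGraph} (η η' : MultiHom G H) : Prop :=
  Relation.ReflTransGen (fun a b => MultiHom.le a b ∨ MultiHom.le b a) η η'

def ofHom {G H : RGraph} (f : G.V → H.V) (hf : IsGraphHom G H f) : MultiHom G H where
  toFun x := {f x}
  nonempty x := ⟨f x, rfl⟩
  edge := by
    intro x y hxy a ha b hb
    rw [Set.mem_singleton_iff] at ha hb
    subst ha; subst hb
    exact hf hxy

def prodI (G : RGraph) (n : ℕ) : RGraph where
  V := G.V × Fin (n + 1)
  E := fun p q => G.E p.1 q.1 ∧ p.2.val ≤ q.2.val + 1 ∧ q.2.val ≤ p.2.val + 1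
  symm := by
    rintro p q ⟨h1, h2, h3⟩
    exact ⟨G.symm h1, h3, h2⟩

def MoveA {G : RGraph} {a b : G.V} (γ δ : Walk G a b) : Prop :=
  δ.len = γ.len + 2 ∧ ∃ k ≤ γ.len,
    (∀ i ≤ k, δ.toFun i = γ.toFun i) ∧
    (∀ i, k ≤ i → i ≤ γ.len → δ.toFun (i + 2) = γ.toFun i)

def MoveB {G : RGraph} {a b : G.V} (γ δ : Walk G a b) : Prop :=
  γ.len = δ.len ∧ ∃ j, ∀ i ≤ γ.len, i ≠ j → γ.toFun i = δ.toFun i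

def Eqv1 {G : RGraph} {a b : G.V} : Walk G a b → Walk G a b → Prop :=
  Relation.EqvGen MoveA

def Eqv2 {G : RGraph} {a b : G.V} : Walk G a b → Walk G a b → Prop :=
  Relation.EqvGen (fun γ δ => MoveA γ δ ∨ MoveB γ δ)

noncomputable def RGraph.dist (G : RGraph) (a b : G.V) : ℕ :=
  sInf {n | ∃ γ : Walk G a b, γ.len = n}

def RGraph.Connected (G : RGraph) : Prop := ∀ a b : G.V, Nonempty (Walk G a b)

def RGraph.Bipartite (G : RGraph) : Prop :=
  ∃ c : G.V → ZMod 2, ∀ {x y}, G.E x y → c x ≠ c y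

def constWalk {G : RGraph} (a : G.V) : Walk G a a :=
  ⟨0, fun _ => a, rfl, rfl, fun i hi => absurd hi (by omega)⟩

def Walk.concat {G : RGraph} {a b c : G.V} (γ : Walk G a b) (δ : Walk G b c) :
    Walk G a c where
  len := γ.len + δ.len
  toFun i := if i ≤ γ.len then γ.toFun i else δ.toFun (i - γ.len)
  start_eq := by simp [γ.start_eq]
  end_eq := by
    by_cases h : δ.len = 0
    · have hbc : b = c := by
        have h1 := δ.end_eq
        rw [h, δ.start_eq] at h1
        exact h1
      simp [h, γ.end_eq, hbc]
    · have h1 : ¬ (γ.len + δ.len ≤ γ.len) := by omega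
      try dsimp only
      rw [if_neg h1]
      have h2 : γ.len + δ.len - γ.len = δ.len := by omega
      rw [h2, δ.end_eq]
  adj := by
    intro i hi
    try dsimp only
    rcases lt_trichotomy i γ.len with h | h | h
    · rw [if_pos (by omega : i ≤ γ.len), if_pos (by omega : i + 1 ≤ γ.len)]
      exact γ.adj i h
    · have hδ : 0 < δ.len := by omega
      rw [if_pos (by omega : i ≤ γ.len), if_neg (by omega : ¬ i + 1 ≤ γ.len)]
      have h2 : i + 1 - γ.len = 1 := by omega
      rw [h2, h, γ.end_eq]
      have h3 := δ.adj 0 hδ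
      rw [δ.start_eq] at h3
      exact h3
    · rw [if_neg (by omega : ¬ i ≤ γ.len), if_neg (by omega : ¬ i + 1 ≤ γ.len)]
      have h2 : i + 1 - γ.len = (i - γ.len) + 1 := by omega
      rw [h2]
      exact δ.adj (i - γ.len) (by omega)

def Walk.reverse {G : RGraph} {a b : G.V} (γ : Walk G a b) : Walk G b a where
  len := γ.len
  toFun i := γ.toFun (γ.len - i)
  start_eq := by simp [γ.end_eq]
  end_eq := by simp [γ.start_eq]
  adj := by
    intro i hi
    have h1 : γ.len - i = (γ.len - (i + 1)) + 1 := by omega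
    have h2 := γ.adj (γ.len - (i + 1)) (by omega)
    rw [← h1] at h2
    exact G.symm h2

def Walk.map {G H : RGraph} (f : G.V → H.V) (hf : IsGraphHom G H f) {a b : G.V}
    (γ : Walk G a b) : Walk H (f a) (f b) where
  len := γ.len
  toFun i := f (γ.toFun i)
  start_eq := by (try dsimp only); rw [γ.start_eq]
  end_eq := by (try dsimp only); rw [γ.end_eq]
  adj := fun i hi => hf (γ.adj i hi)

def Walk.pow {G : RGraph} {a : G.V} (γ : Walk G a a) : ℕ → Walk G a a
  | 0 => constWalk a
  | n + 1 => (Walk.pow γ n).concat γ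

def Walk.zpow {G : RGraph} {a : G.V} (γ : Walk G a a) : ℤ → Walk G a a
  | Int.ofNat n => γ.pow n
  | Int.negSucc n => γ.reverse.pow (n + 1)
def finClip (n t : ℕ) : Fin (n + 1) := ⟨min t n, by omega⟩

def realizedWalk {G H : RGraph} {n : ℕ} (h : (prodI G n).V → H.V)
    (hh : IsGraphHom (prodI G n) H h) {v v' : G.V} (hvv' : G.E v v')
    {w : H.V} (h0 : h (v, finClip n 0) = w) (hN : h (v, finClip n n) = w) :
    Walk H w w where
  len := 2 * n
  toFun i := if i % 2 = 0 then h (v, finClip n (i / 2)) else h (v', finClip n (i / 2))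
  start_eq := by
    try dsimp only
    rw [if_pos (by norm_num : (0:ℕ) % 2 = 0), Nat.zero_div]
    exact h0
  end_eq := by
    try dsimp only
    rw [if_pos (by omega : (2 * n) % 2 = 0)]
    have h2 : 2 * n / 2 = n := by omega
    rw [h2]
    exact hN
  adj := by
    intro i hi
    try dsimp only
    rcases Nat.even_or_odd i with he | ho
    · obtain ⟨t, ht⟩ := he
      rw [if_pos (by omega : i % 2 = 0), if_neg (by omega : ¬ (i + 1) % 2 = 0)]
      have h4 : (i + 1) / 2 = i / 2 := by omega
      rw [h4]
      refine hh ⟨hvv', ?_, ?_⟩ <;> (try dsimp only; omega)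
    · obtain ⟨t, ht⟩ := ho
      rw [if_neg (by omega : ¬ i % 2 = 0), if_pos (by omega : (i + 1) % 2 = 0)]
      refine hh ⟨G.symm hvv', ?_, ?_⟩ <;> (dsimp only [finClip]; omega)

def Realizable {G H : RGraph} (f : G.V → H.V) (v : G.V) (ω : Walk H (f v) (f v)) : Prop :=
  ∃ (n : ℕ) (h : (prodI G n).V → H.V) (hh : IsGraphHom (prodI G n) H h)
    (hs : ∀ x, h (x, finClip n 0) = f x) (he : ∀ x, h (x, finClip n n) = f x)
    (v' : G.V) (_ : G.E v v'),
    Eqv2 ω (realizedWalk h hh ‹G.E v v'› (hs v) (he v))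
def SquareFree (G : RGraph) : Prop :=
  (∀ x, ¬ G.E x x) ∧
  ¬ ∃ a b c d : G.V, a ≠ b ∧ a ≠ c ∧ a ≠ d ∧ b ≠ c ∧ b ≠ d ∧ c ≠ d ∧
    G.E a b ∧ G.E b c ∧ G.E c d ∧ G.E d a

def nbhd (G : RGraph) (v : G.V) : Set G.V := {y | G.E v y}

def nbhd2 (G : RGraph) (v : G.V) : Set G.V := {z | ∃ y, G.E v y ∧ G.E y z}

def IsGraphCovering (G H : RGraph) (p : G.V → H.V) : Prop :=
  IsGraphHom G H p ∧ ∀ v : G.V, Set.BijOn p (nbhd G v) (nbhd H (p v))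

def Is2CoveringMap (G H : RGraph) (p : G.V → H.V) : Prop :=
  IsGraphHom G H p ∧ ∀ v : G.V,
    Set.BijOn p (nbhd G v) (nbhd H (p v)) ∧ Set.BijOn p (nbhd2 G v) (nbhd2 H (p v))

def pushforward {G H1 H2 : RGraph} (p : H1.V → H2.V) (hp : IsGraphHom H1 H2 p)
    (η : MultiHom G H1) : MultiHom G H2 where
  toFun x := p '' η.toFun x
  nonempty x := (η.nonempty x).image p
  edge := by
    rintro x y hxy a ⟨a', ha', rfl⟩ b ⟨b', hb', rfl⟩
    exact hp (η.edge hxy a' ha' b' hb')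

def IsCycleWalk {G : RGraph} {a : G.V} (γ : Walk G a a) : Prop :=
  3 ≤ γ.len ∧ ∀ i j, i < γ.len → j < γ.len → γ.toFun i = γ.toFun j → i = j

def IsTree (T : RGraph) : Prop :=
  (∀ x, ¬ T.E x x) ∧ (∀ a b : T.V, Nonempty (Walk T a b)) ∧
    ∀ (a : T.V) (γ : Walk T a a), ¬ IsCycleWalk γ

def IsPath {G : RGraph} {a b : G.V} (γ : Walk G a b) : Prop :=
  ∀ i j, i ≤ γ.len → j ≤ γ.len → γ.toFun i = γ.toFun j → i = j

def OnWalk {G : RGraph} {a b : G.V} (γ : Walk G a b) (y : G.V) : Prop :=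
  ∃ i ≤ γ.len, γ.toFun i = y

def CrossHomotopic (G H : RGraph) (f g : G.V → H.V) : Prop :=
  ∃ (n : ℕ) (h : (prodI G n).V → H.V), IsGraphHom (prodI G n) H h ∧
    (∀ x, h (x, finClip n 0) = f x) ∧ (∀ x, h (x, finClip n n) = g x)

def quotGraph (G : RGraph) (Γ : Type) [Group Γ] [MulAction Γ G.V] : RGraph where
  V := Quotient (MulAction.orbitRel Γ G.V)
  E := fun α β => ∃ x y : G.V, Quotient.mk (MulAction.orbitRel Γ G.V) x = α ∧
        Quotient.mk (MulAction.orbitRel Γ G.V) y = β ∧ G.E x y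
  symm := by
    rintro α β ⟨x, y, hx, hy, hxy⟩
    exact ⟨y, x, hy, hx, G.symm hxy⟩

/-! A realized walk alternates between the two rows `h(v, ·)` and `h(v', ·)` of the homotopy.
Changing the neighbour `v'`, or running the homotopy backwards, produces a walk whose `i`-th vertex
is adjacent to the `(i+1)`-st vertex of the old one, and such walks are related by single-vertex
replacements (move (B)). Stacking two homotopies from `f` to `f` realizes the concatenated walk, and
the constant homotopy realizes the trivial walk, so `Π(f,v)` is a subgroup. Realized walks have
length `2n` and both moves preserve the parity of the length, so `Π(f,v)` lies in the even part. -/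

namespace Eqv2

variable {G : RGraph} {a b : G.V} {γ δ ρ : Walk G a b}

theorem refl (γ : Walk G a b) : Eqv2 γ γ := Relation.EqvGen.refl γ

theorem symm (h : Eqv2 γ δ) : Eqv2 δ γ := Relation.EqvGen.symm _ _ h

theorem trans (h₁ : Eqv2 γ δ) (h₂ : Eqv2 δ ρ) : Eqv2 γ ρ := Relation.EqvGen.trans _ _ _ h₁ h₂

theorem of_moveA (h : MoveA γ δ) : Eqv2 γ δ := Relation.EqvGen.rel _ _ (Or.inl h)

theorem of_moveB (h : MoveB γ δ) : Eqv2 γ δ := Relation.EqvGen.rel _ _ (Or.inr h)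

theorem of_toFun_eq (hlen : γ.len = δ.len) (h : ∀ i ≤ γ.len, γ.toFun i = δ.toFun i) :
    Eqv2 γ δ :=
  of_moveB ⟨hlen, γ.len + 1, fun i hi _ => h i hi⟩

theorem len_mod_two (h : Eqv2 γ δ) : γ.len % 2 = δ.len % 2 := by
  induction h with
  | rel _ _ hmove => rcases hmove with ⟨hlen, -⟩ | ⟨hlen, -⟩ <;> omega
  | refl => rfl
  | symm _ _ _ ih => omega
  | trans _ _ _ _ _ ih₁ ih₂ => omega

theorem congr_of_move {G' : RGraph} {a' b' : G'.V} (F : Walk G a b → Walk G' a' b')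
    (hF : ∀ γ δ, MoveA γ δ ∨ MoveB γ δ → Eqv2 (F γ) (F δ)) (h : Eqv2 γ δ) :
    Eqv2 (F γ) (F δ) := by
  induction h with
  | rel _ _ hmove => exact hF _ _ hmove
  | refl => exact refl _
  | symm _ _ _ ih => exact ih.symm
  | trans _ _ _ _ _ ih₁ ih₂ => exact ih₁.trans ih₂

end Eqv2

section Interpolate

variable {G : RGraph} {a b : G.V}

-- Thanks to `hadj` this is a walk for every `t`, and raising `t` by one is a move (B).
def Walk.interpolate (γ δ : Walk G a b) (hlen : δ.len = γ.len)
    (hadj : ∀ i < γ.len, G.E (δ.toFun i) (γ.toFun (i + 1))) (t : ℕ) : Walk G a b where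
  len := γ.len
  toFun i := if i < t then δ.toFun i else γ.toFun i
  start_eq := by
    split
    · exact δ.start_eq
    · exact γ.start_eq
  end_eq := by
    split
    · rw [← hlen]; exact δ.end_eq
    · exact γ.end_eq
  adj i hi := by
    rcases lt_trichotomy (i + 1) t with h | h | h
    · rw [if_pos (by omega), if_pos h]
      exact δ.adj i (by omega)
    · rw [if_pos (by omega), if_neg (by omega)]
      exact hadj i hi
    · rw [if_neg (by omega), if_neg (by omega)]
      exact γ.adj i hi

theorem Eqv2.of_adj_next {γ δ : Walk G a b} (hlen : δ.len = γ.len)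
    (hadj : ∀ i < γ.len, G.E (δ.toFun i) (γ.toFun (i + 1))) : Eqv2 γ δ := by
  have step : ∀ t, Eqv2 γ (γ.interpolate δ hlen hadj t) := by
    intro t
    induction t with
    | zero => exact Eqv2.of_toFun_eq rfl fun i _ => by simp [Walk.interpolate]
    | succ t ih =>
      refine ih.trans (Eqv2.of_moveB ⟨rfl, t, fun i _ _ => ?_⟩)
      show (if i < t then _ else _) = if i < t + 1 then _ else _
      by_cases h : i < t
      · rw [if_pos h, if_pos (by omega)]
      · rw [if_neg h, if_neg (by omega)]
  refine (step (γ.len + 1)).trans (Eqv2.of_toFun_eq hlen.symm fun i hi => ?_)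
  exact if_pos (Nat.lt_succ_of_le hi)

end Interpolate

section Moves

variable {G : RGraph} {a b c : G.V}

theorem Walk.concat_len (γ : Walk G a b) (ρ : Walk G b c) :
    (γ.concat ρ).len = γ.len + ρ.len := rfl

theorem Walk.concat_toFun (γ : Walk G a b) (ρ : Walk G b c) (i : ℕ) :
    (γ.concat ρ).toFun i = if i ≤ γ.len then γ.toFun i else ρ.toFun (i - γ.len) := rfl

theorem Walk.reverse_len (γ : Walk G a b) : γ.reverse.len = γ.len := rfl

theorem Walk.reverse_toFun (γ : Walk G a b) (i : ℕ) :
    γ.reverse.toFun i = γ.toFun (γ.len - i) := rfl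

open Walk

theorem MoveA.concat_right {γ δ : Walk G a b} (ρ : Walk G b c) (h : MoveA γ δ) :
    MoveA (γ.concat ρ) (δ.concat ρ) := by
  obtain ⟨hlen, k, hk, hbefore, hafter⟩ := h
  refine ⟨by simp only [concat_len]; omega, k, by simp only [concat_len]; omega,
    fun i hi => ?_, fun i hki hi => ?_⟩
  · simp only [concat_toFun]
    rw [if_pos (by omega), if_pos (by omega)]
    exact hbefore i hi
  · simp only [concat_len] at hi
    simp only [concat_toFun]
    by_cases hiγ : i ≤ γ.len
    · rw [if_pos (by omega), if_pos hiγ]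
      exact hafter i hki hiγ
    · rw [if_neg (by omega), if_neg hiγ, show i + 2 - δ.len = i - γ.len by omega]

theorem MoveB.concat_right {γ δ : Walk G a b} (ρ : Walk G b c) (h : MoveB γ δ) :
    MoveB (γ.concat ρ) (δ.concat ρ) := by
  obtain ⟨hlen, j, hj⟩ := h
  refine ⟨by simp only [concat_len]; omega, j, fun i _ hij => ?_⟩
  simp only [concat_toFun]
  by_cases hiγ : i ≤ γ.len
  · rw [if_pos hiγ, if_pos (by omega)]
    exact hj i hiγ hij
  · rw [if_neg hiγ, if_neg (by omega), hlen]

theorem MoveA.concat_left (ρ : Walk G a b) {γ δ : Walk G b c} (h : MoveA γ δ) :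
    MoveA (ρ.concat γ) (ρ.concat δ) := by
  obtain ⟨hlen, k, hk, hbefore, hafter⟩ := h
  refine ⟨by simp only [concat_len]; omega, ρ.len + k, by simp only [concat_len]; omega,
    fun i hi => ?_, fun i hki hi => ?_⟩
  · simp only [concat_toFun]
    by_cases hiρ : i ≤ ρ.len
    · rw [if_pos hiρ, if_pos hiρ]
    · rw [if_neg hiρ, if_neg hiρ]
      exact hbefore _ (by omega)
  · simp only [concat_len] at hi
    simp only [concat_toFun]
    by_cases hiρ : i ≤ ρ.len
    · obtain rfl : i = ρ.len := by omega
      rw [if_neg (by omega), if_pos le_rfl, show ρ.len + 2 - ρ.len = 0 + 2 by omega,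
        hafter 0 (by omega) (Nat.zero_le _), γ.start_eq, ρ.end_eq]
    · rw [if_neg (by omega), if_neg hiρ, show i + 2 - ρ.len = i - ρ.len + 2 by omega]
      exact hafter _ (by omega) (by omega)

theorem MoveB.concat_left (ρ : Walk G a b) {γ δ : Walk G b c} (h : MoveB γ δ) :
    MoveB (ρ.concat γ) (ρ.concat δ) := by
  obtain ⟨hlen, j, hj⟩ := h
  refine ⟨by simp only [concat_len]; omega, ρ.len + j, fun i hi hij => ?_⟩
  simp only [concat_len] at hi
  simp only [concat_toFun]
  by_cases hiρ : i ≤ ρ.len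
  · rw [if_pos hiρ, if_pos hiρ]
  · rw [if_neg hiρ, if_neg hiρ]
    exact hj _ (by omega) (by omega)

theorem MoveA.reverse {γ δ : Walk G a b} (h : MoveA γ δ) : MoveA γ.reverse δ.reverse := by
  obtain ⟨hlen, k, hk, hbefore, hafter⟩ := h
  refine ⟨by simp only [reverse_len]; omega, γ.len - k, by simp only [reverse_len]; omega,
    fun i hi => ?_, fun i hki hi => ?_⟩
  · simp only [reverse_toFun] at *
    rw [show δ.len - i = γ.len - i + 2 by omega]
    exact hafter _ (by omega) (by omega)
  · simp only [reverse_toFun, reverse_len] at *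
    rw [show δ.len - (i + 2) = γ.len - i by omega]
    exact hbefore _ (by omega)

theorem MoveB.reverse {γ δ : Walk G a b} (h : MoveB γ δ) : MoveB γ.reverse δ.reverse := by
  obtain ⟨hlen, j, hj⟩ := h
  refine ⟨hlen, γ.len - j, fun i hi hij => ?_⟩
  simp only [reverse_toFun, reverse_len] at *
  rw [← hlen]
  exact hj _ (by omega) (by omega)

theorem Eqv2.concat_right {γ δ : Walk G a b} (ρ : Walk G b c) (h : Eqv2 γ δ) :
    Eqv2 (γ.concat ρ) (δ.concat ρ) :=
  h.congr_of_move (·.concat ρ) fun _ _ hmove => hmove.elim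
    (fun hA => .of_moveA (hA.concat_right ρ)) (fun hB => .of_moveB (hB.concat_right ρ))

theorem Eqv2.concat_left (ρ : Walk G a b) {γ δ : Walk G b c} (h : Eqv2 γ δ) :
    Eqv2 (ρ.concat γ) (ρ.concat δ) :=
  h.congr_of_move ρ.concat fun _ _ hmove => hmove.elim
    (fun hA => .of_moveA (hA.concat_left ρ)) (fun hB => .of_moveB (hB.concat_left ρ))

theorem Eqv2.concat {γ γ' : Walk G a b} {δ δ' : Walk G b c} (hγ : Eqv2 γ γ')
    (hδ : Eqv2 δ δ') : Eqv2 (γ.concat δ) (γ'.concat δ') :=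
  (hγ.concat_right δ).trans (hδ.concat_left γ')

theorem Eqv2.reverse {γ δ : Walk G a b} (h : Eqv2 γ δ) : Eqv2 γ.reverse δ.reverse :=
  h.congr_of_move Walk.reverse fun _ _ hmove => hmove.elim
    (fun hA => .of_moveA hA.reverse) (fun hB => .of_moveB hB.reverse)

end Moves

section Homotopy

variable {G H : RGraph}

theorem finClip_val (n t : ℕ) : (finClip n t).val = min t n := rfl

theorem finClip_val_self {n : ℕ} (i : Fin (n + 1)) : finClip n i.val = i :=
  Fin.ext (by simp only [finClip_val]; omega)

theorem IsGraphHom.adj_finClip {n : ℕ} {h : (prodI G n).V → H.V}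
    (hh : IsGraphHom (prodI G n) H h) {x y : G.V} (hxy : G.E x y) {s t : ℕ}
    (hst : s ≤ t + 1) (hts : t ≤ s + 1) : H.E (h (x, finClip n s)) (h (y, finClip n t)) :=
  hh ⟨hxy, by simp only [finClip_val]; omega, by simp only [finClip_val]; omega⟩

def homConcat {n₁ n₂ : ℕ} (h₁ : (prodI G n₁).V → H.V) (h₂ : (prodI G n₂).V → H.V) :
    (prodI G (n₁ + n₂)).V → H.V :=
  fun p => if p.2.val ≤ n₁ then h₁ (p.1, finClip n₁ p.2.val)
    else h₂ (p.1, finClip n₂ (p.2.val - n₁))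

def homReverse {n : ℕ} (h : (prodI G n).V → H.V) : (prodI G n).V → H.V :=
  fun p => h (p.1, finClip n (n - p.2.val))

variable {n₁ n₂ : ℕ} {h₁ : (prodI G n₁).V → H.V} {h₂ : (prodI G n₂).V → H.V}

theorem homConcat_finClip_of_le (x : G.V) {t : ℕ} (ht : t ≤ n₁) :
    homConcat h₁ h₂ (x, finClip (n₁ + n₂) t) = h₁ (x, finClip n₁ t) := by
  unfold homConcat
  dsimp only
  rw [if_pos (by simp only [finClip_val]; omega)]
  congr 2
  exact Fin.ext (by simp only [finClip_val]; omega)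

theorem homConcat_finClip_of_ge (hmid : ∀ x, h₁ (x, finClip n₁ n₁) = h₂ (x, finClip n₂ 0))
    (x : G.V) {t : ℕ} (ht : n₁ ≤ t) :
    homConcat h₁ h₂ (x, finClip (n₁ + n₂) t) = h₂ (x, finClip n₂ (t - n₁)) := by
  unfold homConcat
  dsimp only
  split_ifs with hle <;> simp only [finClip_val] at hle
  · rw [show finClip n₁ _ = finClip n₁ n₁ from Fin.ext (by simp only [finClip_val]; omega), hmid]
    congr 2
    exact Fin.ext (by simp only [finClip_val]; omega)
  · congr 2
    exact Fin.ext (by simp only [finClip_val]; omega)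

theorem homConcat_isGraphHom (hh₁ : IsGraphHom (prodI G n₁) H h₁)
    (hh₂ : IsGraphHom (prodI G n₂) H h₂)
    (hmid : ∀ x, h₁ (x, finClip n₁ n₁) = h₂ (x, finClip n₂ 0)) :
    IsGraphHom (prodI G (n₁ + n₂)) H (homConcat h₁ h₂) := by
  rintro ⟨x, i⟩ ⟨y, j⟩ ⟨hxy, hij, hji⟩
  replace hij : i.val ≤ j.val + 1 := hij
  replace hji : j.val ≤ i.val + 1 := hji
  rw [← finClip_val_self i, ← finClip_val_self j]
  by_cases hi : i.val ≤ n₁ <;> by_cases hj : j.val ≤ n₁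
  · rw [homConcat_finClip_of_le x hi, homConcat_finClip_of_le y hj]
    exact hh₁.adj_finClip hxy hij hji
  all_goals
    rw [homConcat_finClip_of_ge hmid x (by omega), homConcat_finClip_of_ge hmid y (by omega)]
    exact hh₂.adj_finClip hxy (by omega) (by omega)

theorem homConcat_start (x : G.V) :
    homConcat h₁ h₂ (x, finClip (n₁ + n₂) 0) = h₁ (x, finClip n₁ 0) :=
  homConcat_finClip_of_le x (Nat.zero_le n₁)

theorem homConcat_end (hmid : ∀ x, h₁ (x, finClip n₁ n₁) = h₂ (x, finClip n₂ 0)) (x : G.V) :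
    homConcat h₁ h₂ (x, finClip (n₁ + n₂) (n₁ + n₂)) = h₂ (x, finClip n₂ n₂) := by
  rw [homConcat_finClip_of_ge hmid x (Nat.le_add_right n₁ n₂), Nat.add_sub_cancel_left]

variable {n : ℕ} {h : (prodI G n).V → H.V}

theorem homReverse_finClip (x : G.V) (t : ℕ) :
    homReverse h (x, finClip n t) = h (x, finClip n (n - t)) := by
  unfold homReverse
  congr 2
  exact Fin.ext (by simp only [finClip_val]; omega)

theorem homReverse_isGraphHom (hh : IsGraphHom (prodI G n) H h) :
    IsGraphHom (prodI G n) H (homReverse h) := by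
  rintro ⟨x, i⟩ ⟨y, j⟩ ⟨hxy, hij, hji⟩
  replace hij : i.val ≤ j.val + 1 := hij
  replace hji : j.val ≤ i.val + 1 := hji
  show H.E (h (x, finClip n (n - i.val))) (h (y, finClip n (n - j.val)))
  exact hh.adj_finClip hxy (by omega) (by omega)

theorem homReverse_start (x : G.V) : homReverse h (x, finClip n 0) = h (x, finClip n n) := by
  rw [homReverse_finClip, Nat.sub_zero]

theorem homReverse_end (x : G.V) : homReverse h (x, finClip n n) = h (x, finClip n 0) := by
  rw [homReverse_finClip, Nat.sub_self]

end Homotopy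

section RealizedWalk

variable {G H : RGraph} {n : ℕ} {h : (prodI G n).V → H.V} {hh : IsGraphHom (prodI G n) H h}
  {v v' : G.V} {w : H.V}

theorem realizedWalk_len (hvv' : G.E v v') (h0 : h (v, finClip n 0) = w)
    (hN : h (v, finClip n n) = w) : (realizedWalk h hh hvv' h0 hN).len = 2 * n := rfl

theorem realizedWalk_toFun (hvv' : G.E v v') (h0 : h (v, finClip n 0) = w)
    (hN : h (v, finClip n n) = w) (i : ℕ) :
    (realizedWalk h hh hvv' h0 hN).toFun i = h (if i % 2 = 0 then v else v', finClip n (i / 2)) :=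
  (apply_ite (fun u => h (u, finClip n (i / 2))) _ v v').symm

theorem eqv2_realizedWalk_neighbor {v'' : G.V} (hvv' : G.E v v') (hvv'' : G.E v v'')
    (h0 : h (v, finClip n 0) = w) (hN : h (v, finClip n n) = w) :
    Eqv2 (realizedWalk h hh hvv' h0 hN) (realizedWalk h hh hvv'' h0 hN) := by
  refine Eqv2.of_adj_next rfl fun i hi => ?_
  rw [realizedWalk_len] at hi
  rw [realizedWalk_toFun, realizedWalk_toFun]
  rcases Nat.even_or_odd' i with ⟨t, rfl | rfl⟩
  · rw [if_pos (by omega), if_neg (by omega)]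
    refine hh.adj_finClip hvv' ?_ ?_ <;> omega
  · rw [if_neg (by omega), if_pos (by omega)]
    refine hh.adj_finClip (G.symm hvv'') ?_ ?_ <;> omega

theorem eqv2_reverse_realizedWalk (hvv' : G.E v v') (h0 : h (v, finClip n 0) = w)
    (hN : h (v, finClip n n) = w) (hhr : IsGraphHom (prodI G n) H (homReverse h))
    (hr0 : homReverse h (v, finClip n 0) = w) (hrN : homReverse h (v, finClip n n) = w) :
    Eqv2 (realizedWalk h hh hvv' h0 hN).reverse (realizedWalk (homReverse h) hhr hvv' hr0 hrN) := by
  apply Eqv2.symm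
  refine Eqv2.of_adj_next rfl fun i hi => ?_
  rw [realizedWalk_len] at hi
  rw [Walk.reverse_toFun, realizedWalk_len, realizedWalk_toFun, realizedWalk_toFun,
    homReverse_finClip]
  rcases Nat.even_or_odd' i with ⟨t, rfl | rfl⟩
  · rw [if_pos (by omega), if_neg (by omega)]
    refine hh.adj_finClip hvv' ?_ ?_ <;> omega
  · rw [if_neg (by omega), if_pos (by omega)]
    refine hh.adj_finClip (G.symm hvv') ?_ ?_ <;> omega

theorem eqv2_concat_realizedWalk {n₁ n₂ : ℕ} {h₁ : (prodI G n₁).V → H.V}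
    {h₂ : (prodI G n₂).V → H.V} {hh₁ : IsGraphHom (prodI G n₁) H h₁}
    {hh₂ : IsGraphHom (prodI G n₂) H h₂} (hvv' : G.E v v')
    (h₁0 : h₁ (v, finClip n₁ 0) = w) (h₁N : h₁ (v, finClip n₁ n₁) = w)
    (h₂0 : h₂ (v, finClip n₂ 0) = w) (h₂N : h₂ (v, finClip n₂ n₂) = w)
    (hmid : ∀ x, h₁ (x, finClip n₁ n₁) = h₂ (x, finClip n₂ 0))
    (hhc : IsGraphHom (prodI G (n₁ + n₂)) H (homConcat h₁ h₂))
    (hc0 : homConcat h₁ h₂ (v, finClip (n₁ + n₂) 0) = w)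
    (hcN : homConcat h₁ h₂ (v, finClip (n₁ + n₂) (n₁ + n₂)) = w) :
    Eqv2 ((realizedWalk h₁ hh₁ hvv' h₁0 h₁N).concat (realizedWalk h₂ hh₂ hvv' h₂0 h₂N))
      (realizedWalk (homConcat h₁ h₂) hhc hvv' hc0 hcN) := by
  refine Eqv2.of_toFun_eq (by simp only [Walk.concat_len, realizedWalk_len]; ring) fun i hi => ?_
  simp only [Walk.concat_len, realizedWalk_len] at hi
  rw [Walk.concat_toFun, realizedWalk_len, realizedWalk_toFun, realizedWalk_toFun,
    realizedWalk_toFun]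
  by_cases hi₁ : i ≤ 2 * n₁
  · rw [if_pos hi₁, homConcat_finClip_of_le _ (by omega)]
  · rw [if_neg hi₁, homConcat_finClip_of_ge hmid _ (by omega), show (i - 2 * n₁) % 2 = i % 2 by omega,
      show (i - 2 * n₁) / 2 = i / 2 - n₁ by omega]

end RealizedWalk

namespace Realizable

variable {G H : RGraph} {f : G.V → H.V} {v : G.V}

theorem of_eqv2 {ω ω' : Walk H (f v) (f v)} (hω : Realizable f v ω) (hωω' : Eqv2 ω ω') :
    Realizable f v ω' := by
  obtain ⟨n, h, hh, hs, he, v', hvv', hreal⟩ := hω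
  exact ⟨n, h, hh, hs, he, v', hvv', hωω'.symm.trans hreal⟩

theorem even_len {ω : Walk H (f v) (f v)} (hω : Realizable f v ω) : Even ω.len := by
  obtain ⟨n, h, hh, hs, he, v', hvv', hreal⟩ := hω
  have hmod := hreal.len_mod_two
  rw [realizedWalk_len] at hmod
  exact Nat.even_iff.mpr (by omega)

theorem constWalk (hf : IsGraphHom G H f) {v' : G.V} (hvv' : G.E v v') :
    Realizable f v (constWalk (f v)) := by
  refine ⟨0, fun p => f p.1, fun hxy => hf hxy.1, fun _ => rfl, fun _ => rfl, v', hvv', ?_⟩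
  refine Eqv2.of_toFun_eq rfl fun i hi => ?_
  obtain rfl : i = 0 := Nat.le_zero.mp hi
  rfl

theorem reverse {ω : Walk H (f v) (f v)} (hω : Realizable f v ω) : Realizable f v ω.reverse := by
  obtain ⟨n, h, hh, hs, he, v', hvv', hreal⟩ := hω
  have hsr (x : G.V) : homReverse h (x, finClip n 0) = f x := (homReverse_start x).trans (he x)
  have her (x : G.V) : homReverse h (x, finClip n n) = f x := (homReverse_end x).trans (hs x)
  have hhr : IsGraphHom (prodI G n) H (homReverse h) := homReverse_isGraphHom hh
  exact ⟨n, homReverse h, hhr, hsr, her, v', hvv',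
    hreal.reverse.trans (eqv2_reverse_realizedWalk hvv' (hs v) (he v) hhr (hsr v) (her v))⟩

theorem concat {ω₁ ω₂ : Walk H (f v) (f v)} (hω₁ : Realizable f v ω₁)
    (hω₂ : Realizable f v ω₂) : Realizable f v (ω₁.concat ω₂) := by
  obtain ⟨n₁, h₁, hh₁, hs₁, he₁, v', hvv', hreal₁⟩ := hω₁
  obtain ⟨n₂, h₂, hh₂, hs₂, he₂, v'', hvv'', hreal₂⟩ := hω₂
  have hmid (x : G.V) : h₁ (x, finClip n₁ n₁) = h₂ (x, finClip n₂ 0) :=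
    (he₁ x).trans (hs₂ x).symm
  have hsc (x : G.V) : homConcat h₁ h₂ (x, finClip (n₁ + n₂) 0) = f x :=
    (homConcat_start x).trans (hs₁ x)
  have hec (x : G.V) : homConcat h₁ h₂ (x, finClip (n₁ + n₂) (n₁ + n₂)) = f x :=
    (homConcat_end hmid x).trans (he₂ x)
  have hhc : IsGraphHom (prodI G (n₁ + n₂)) H (homConcat h₁ h₂) :=
    homConcat_isGraphHom hh₁ hh₂ hmid
  have hreal₂' := hreal₂.trans (eqv2_realizedWalk_neighbor hvv'' hvv' (hs₂ v) (he₂ v))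
  exact ⟨n₁ + n₂, homConcat h₁ h₂, hhc, hsc, hec, v', hvv', (hreal₁.concat hreal₂').trans
    (eqv2_concat_realizedWalk hvv' (hs₁ v) (he₁ v) (hs₂ v) (he₂ v) hmid hhc (hsc v) (hec v))⟩

end Realizable

theorem statement_9 (G H : RGraph) (f : G.V → H.V) (hf : IsGraphHom G H f)
    (v : G.V) (hv : ∃ v' : G.V, G.E v v') :
    (∀ (n : ℕ) (h : (prodI G n).V → H.V) (hh : IsGraphHom (prodI G n) H h)
      (hs : ∀ x, h (x, finClip n 0) = f x) (he : ∀ x, h (x, finClip n n) = f x)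
      (v' v'' : G.V) (hvv' : G.E v v') (hvv'' : G.E v v''),
      Eqv2 (realizedWalk h hh hvv' (hs v) (he v))
        (realizedWalk h hh hvv'' (hs v) (he v))) ∧
    Realizable f v (constWalk (f v)) ∧
    (∀ ω₁ ω₂ : Walk H (f v) (f v), Realizable f v ω₁ → Realizable f v ω₂ →
      Realizable f v (ω₁.concat ω₂)) ∧
    (∀ ω : Walk H (f v) (f v), Realizable f v ω → Realizable f v ω.reverse) ∧
    (∀ ω ω' : Walk H (f v) (f v), Realizable f v ω → Eqv2 ω ω' → Realizable f v ω') ∧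
    (∀ ω : Walk H (f v) (f v), Realizable f v ω → Even ω.len) := by
  obtain ⟨v', hvv'⟩ := hv
  exact ⟨fun _ _ _ hs he _ _ hvv' hvv'' => eqv2_realizedWalk_neighbor hvv' hvv'' (hs v) (he v),
    Realizable.constWalk hf hvv', fun _ _ => Realizable.concat, fun _ => Realizable.reverse,
    fun _ _ => Realizable.of_eqv2, fun _ => Realizable.even_len⟩
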